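/- Let (A, E, ε) be a B-B-noncommutative probability space. Then there exist a B-B-bimodule with specified B-projection (X, X̊, p) and a unital algebra homomorphism θ : A → L(X) such that θ(ε(b₁⊗b₂)) acts on X as ξ ↦ b₁·ξ·b₂ for all b₁, b₂ ∈ B, θ(A_ℓ) ⊆ L_ℓ(X), θ(A_r) ⊆ L_r(X), and E_{L(X)}(θ(T)) = E(T) for all T ∈ A. -/

import Mathlib

/-!
Take `X = A ⧸ N` for the largest left ideal `N = {x | ∀ a, E (a * x) = 0}` inside `ker E`,
let `A` act by left multiplication, `B` act through `L_b` and `R_b`, and put `ι b = [L_b]`,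
`p [x] = E x`. The relation `E (T L_b) = E (T R_b)` puts `R_b L_c - L_{cb}` into `N`, which makes
`ι` right `B`-linear, and `E (ε (b₁ ⊗ b₂) T) = b₁ E(T) b₂` makes `ker p` invariant under both
actions.
-/

open scoped TensorProduct

/-! `B`-`B`-non-commutative probability spaces. -/

variable (B A : Type) [Ring B] [Algebra ℂ B] [Ring A] [Algebra ℂ A]

/-- A `B`-`B`-non-commutative probability space structure on a unital ℂ-algebra `A`:
a unital homomorphism `ε : B ⊗ B^op → A` injective on `B ⊗ 1` and on `1 ⊗ B`, and a
ℂ-linear expectation `E : A → B` satisfying `E(ε(b₁⊗b₂)T) = b₁ E(T) b₂`,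
`E(T ε(b⊗1)) = E(T ε(1⊗b))`, and `E(1) = 1`. -/
structure BBncps where
  eps : (B ⊗[ℂ] Bᵐᵒᵖ) →ₐ[ℂ] A
  E : A →ₗ[ℂ] B
  E_one : E 1 = 1
  injL : Function.Injective fun b : B => eps (b ⊗ₜ[ℂ] (1 : Bᵐᵒᵖ))
  injR : Function.Injective fun b : B => eps ((1 : B) ⊗ₜ[ℂ] MulOpposite.op b)
  E_eps : ∀ (b₁ b₂ : B) (T : A),
    E (eps (b₁ ⊗ₜ[ℂ] MulOpposite.op b₂) * T) = b₁ * E T * b₂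
  E_right : ∀ (b : B) (T : A),
    E (T * eps (b ⊗ₜ[ℂ] (1 : Bᵐᵒᵖ))) = E (T * eps ((1 : B) ⊗ₜ[ℂ] MulOpposite.op b))

variable {B A}

/-- `L_b = ε(b ⊗ 1)`. -/
noncomputable def BBncps.Lb (P : BBncps B A) (b : B) : A := P.eps (b ⊗ₜ[ℂ] (1 : Bᵐᵒᵖ))

/-- `R_b = ε(1 ⊗ b)`. -/
noncomputable def BBncps.Rb (P : BBncps B A) (b : B) : A := P.eps ((1 : B) ⊗ₜ[ℂ] MulOpposite.op b)

/-- The left algebra `A_ℓ` of elements commuting with all `R_b`. -/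
def BBncps.Aleft (P : BBncps B A) : Set A := {T | ∀ b : B, T * P.Rb b = P.Rb b * T}

/-- The right algebra `A_r` of elements commuting with all `L_b`. -/
def BBncps.Aright (P : BBncps B A) : Set A := {T | ∀ b : B, T * P.Lb b = P.Lb b * T}

/-- A `B`-`B`-bimodule with a specified `B`-projection: a ℂ-module `X` with commuting
unital left and right `B`-actions, an embedding `ι : B → X` and a projection
`p : X → B` with `p ∘ ι = id`, such that `ι` is a bimodule map and the kernel of `p`
(the complement `X̊`) is invariant under both actions, so that `X = B ⊕ X̊` as
`B`-`B`-bimodules. -/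
structure BBBimod (B : Type) [Ring B] [Algebra ℂ B] where
  X : Type
  [addX : AddCommGroup X]
  [modX : Module ℂ X]
  lAct : B →ₐ[ℂ] Module.End ℂ X
  rAct : Bᵐᵒᵖ →ₐ[ℂ] Module.End ℂ X
  comm : ∀ (b : B) (b' : Bᵐᵒᵖ), lAct b * rAct b' = rAct b' * lAct b
  iota : B →ₗ[ℂ] X
  proj : X →ₗ[ℂ] B
  proj_iota : ∀ b : B, proj (iota b) = b
  lAct_iota : ∀ b c : B, lAct b (iota c) = iota (b * c)
  rAct_iota : ∀ b c : B, rAct (MulOpposite.op b) (iota c) = iota (c * b)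
  inv_l : ∀ (b : B) (x : X), proj x = 0 → proj (lAct b x) = 0
  inv_r : ∀ (b : Bᵐᵒᵖ) (x : X), proj x = 0 → proj (rAct b x) = 0

attribute [instance] BBBimod.addX BBBimod.modX

namespace BBBimod

variable {B : Type} [Ring B] [Algebra ℂ B] (M : BBBimod B)

/-- The expectation `E_{L(X)}(T) = p (T (1_B ⊕ 0))` on `L(X)`. -/
def ELX (T : Module.End ℂ M.X) : B := M.proj (T (M.iota 1))

/-- The left operators `L_ℓ(X)`: those commuting with the right `B`-action. -/
def Lleft : Set (Module.End ℂ M.X) :=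
  {T | ∀ b : Bᵐᵒᵖ, T * M.rAct b = M.rAct b * T}

/-- The right operators `L_r(X)`: those commuting with the left `B`-action. -/
def Lright : Set (Module.End ℂ M.X) :=
  {T | ∀ b : B, T * M.lAct b = M.lAct b * T}

end BBBimod

namespace LinearMap

section Semiring

variable {R A V : Type*} [CommSemiring R] [Semiring A] [Algebra R A] [AddCommMonoid V]
  [Module R V]

def leftNullIdeal (φ : A →ₗ[R] V) : Submodule A A where
  carrier := {x | ∀ a, φ (a * x) = 0}
  zero_mem' a := by simp
  add_mem' hx hy a := by simp [mul_add, hx a, hy a]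
  smul_mem' c x hx a := by simpa [mul_assoc] using hx (a * c)

theorem mem_leftNullIdeal {φ : A →ₗ[R] V} {x : A} :
    x ∈ φ.leftNullIdeal ↔ ∀ a, φ (a * x) = 0 := Iff.rfl

end Semiring

variable {R A V : Type*} [CommRing R] [Ring A] [Algebra R A] [AddCommGroup V] [Module R V]

def leftNullLift (φ : A →ₗ[R] V) : (A ⧸ φ.leftNullIdeal) →ₗ[R] V :=
  (φ.leftNullIdeal.restrictScalars R).liftQ φ (fun x hx => by simpa using hx 1) ∘ₗ
    (Submodule.Quotient.restrictScalarsEquiv R φ.leftNullIdeal).symm.toLinearMap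

@[simp]
theorem leftNullLift_mk (φ : A →ₗ[R] V) (x : A) :
    φ.leftNullLift (Submodule.Quotient.mk x) = φ x := rfl

end LinearMap

namespace BBncps

variable {B A : Type} [Ring B] [Algebra ℂ B] [Ring A] [Algebra ℂ A] (P : BBncps B A)

theorem eps_tmul (b₁ b₂ : B) : P.eps (b₁ ⊗ₜ[ℂ] MulOpposite.op b₂) = P.Lb b₁ * P.Rb b₂ := by
  rw [Lb, Rb, ← map_mul, Algebra.TensorProduct.tmul_mul_tmul, mul_one, one_mul]

theorem Lb_one : P.Lb 1 = 1 := map_one P.eps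

theorem Lb_mul (b c : B) : P.Lb b * P.Lb c = P.Lb (b * c) := by
  rw [Lb, Lb, Lb, ← map_mul, Algebra.TensorProduct.tmul_mul_tmul, mul_one]

theorem Rb_mul_Lb (b c : B) : P.Rb b * P.Lb c = P.Lb c * P.Rb b := by
  rw [Lb, Rb, ← map_mul, ← map_mul, Algebra.TensorProduct.tmul_mul_tmul,
    Algebra.TensorProduct.tmul_mul_tmul, mul_one, one_mul, mul_one, one_mul]

theorem E_Lb (b : B) : P.E (P.Lb b) = b := by
  simpa [Lb, P.E_one] using P.E_eps b 1 1

theorem E_mul_Lb (T : A) (b : B) : P.E (T * P.Lb b) = P.E (T * P.Rb b) := P.E_right b T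

abbrev nullIdeal : Submodule A A := P.E.leftNullIdeal

noncomputable def leftRegularRep : A →ₐ[ℂ] Module.End ℂ (A ⧸ P.nullIdeal) :=
  Algebra.lsmul ℂ ℂ (A ⧸ P.nullIdeal)

theorem Rb_mul_Lb_sub_Lb_mem_nullIdeal (b c : B) :
    P.Rb b * P.Lb c - P.Lb (c * b) ∈ P.nullIdeal := by
  refine LinearMap.mem_leftNullIdeal.2 fun a => ?_
  rw [P.Rb_mul_Lb, ← P.Lb_mul, mul_sub, map_sub, ← mul_assoc, ← mul_assoc, E_mul_Lb, sub_self]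

theorem leftNullLift_leftRegularRep_eps (b₁ b₂ : B) (x : A ⧸ P.nullIdeal) :
    P.E.leftNullLift (P.leftRegularRep (P.eps (b₁ ⊗ₜ[ℂ] MulOpposite.op b₂)) x) =
      b₁ * P.E.leftNullLift x * b₂ := by
  obtain ⟨a, rfl⟩ := Submodule.Quotient.mk_surjective _ x
  exact P.E_eps b₁ b₂ a

noncomputable def toBBBimod : BBBimod B where
  X := A ⧸ P.nullIdeal
  lAct := P.leftRegularRep.comp (P.eps.comp Algebra.TensorProduct.includeLeft)
  rAct := P.leftRegularRep.comp (P.eps.comp Algebra.TensorProduct.includeRight)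
  comm b b' := by
    simp only [AlgHom.comp_apply, ← map_mul, Algebra.TensorProduct.includeLeft_apply,
      Algebra.TensorProduct.includeRight_apply, Algebra.TensorProduct.tmul_mul_tmul, one_mul,
      mul_one]
  iota := P.nullIdeal.mkQ.restrictScalars ℂ ∘ₗ
    (P.eps.comp Algebra.TensorProduct.includeLeft).toLinearMap
  proj := P.E.leftNullLift
  proj_iota := P.E_Lb
  lAct_iota b c := congrArg Submodule.Quotient.mk (P.Lb_mul b c)
  rAct_iota b c := (Submodule.Quotient.eq _).2 (P.Rb_mul_Lb_sub_Lb_mem_nullIdeal b c)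
  inv_l b x hx := by simpa [hx] using P.leftNullLift_leftRegularRep_eps b 1 x
  inv_r b x hx := by simpa [hx] using P.leftNullLift_leftRegularRep_eps 1 b.unop x

end BBncps

/-- (Theorem 3.2.4 of [CNS15].)  Every `B`-`B`-non-commutative
probability space `(A, E, ε)` admits a `B`-`B`-bimodule with specified `B`-projection
`(X, X̊, p)` and a unital algebra homomorphism `θ : A → L(X)` such that
`θ(ε(b₁ ⊗ b₂))` acts as `ξ ↦ b₁ · ξ · b₂`, `θ(A_ℓ) ⊆ L_ℓ(X)`, `θ(A_r) ⊆ L_r(X)`, and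
`E_{L(X)} ∘ θ = E`. -/
theorem statement3 {B A : Type} [Ring B] [Algebra ℂ B] [Ring A] [Algebra ℂ A]
    (P : BBncps B A) :
    ∃ (M : BBBimod B) (θ : A →ₐ[ℂ] Module.End ℂ M.X),
      (∀ b₁ b₂ : B,
        θ (P.eps (b₁ ⊗ₜ[ℂ] MulOpposite.op b₂)) = M.lAct b₁ * M.rAct (MulOpposite.op b₂)) ∧
      (∀ T ∈ P.Aleft, θ T ∈ M.Lleft) ∧
      (∀ T ∈ P.Aright, θ T ∈ M.Lright) ∧
      (∀ T : A, M.ELX (θ T) = P.E T) := by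
  refine ⟨P.toBBBimod, P.leftRegularRep, fun b₁ b₂ => ?_, fun T hT b => ?_, fun T hT b => ?_,
    fun T => ?_⟩
  · exact (congrArg P.leftRegularRep (P.eps_tmul b₁ b₂)).trans (map_mul P.leftRegularRep _ _)
  · exact Commute.map (hT b.unop) P.leftRegularRep
  · exact Commute.map (hT b) P.leftRegularRep
  · show P.E (T * P.Lb 1) = P.E T
    rw [P.Lb_one, mul_one]
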